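/- Let f, F be holomorphic on an open set containing the closed right half-plane {Re λ ≥ 0}, with f(λ) → 1 and F(λ) → 1 as |λ| → ∞ in the closed right half-plane, f having no zeros on the imaginary axis, and sup_{ω∈ℝ} |F(iω) − f(iω)| < inf_{ω∈ℝ} |f(iω)|, with F also having no zeros on the imaginary axis. If additionally f and F have finitely many zeros in the open right half-plane, then the number of zeros of F in the open right half-plane (with multiplicity) equals the number of zeros of f in the open right half-plane. -/

import Mathlib

open Filter
open scoped Real Topology

namespace Stmt10Aux

open Complex Metric Set

noncomputable def mob (w : ℂ) : ℂ := (1 - w) / (1 + w)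

lemma one_add_ne_zero_of_norm_lt_one {w : ℂ} (h : ‖w‖ < 1) : 1 + w ≠ 0 := by
  intro hc
  have hw : w = -1 := by linear_combination hc
  rw [hw] at h
  simp at h

lemma one_add_ne_zero_of_re_pos {z : ℂ} (h : 0 < z.re) : 1 + z ≠ 0 := by
  intro hc
  have : (1 + z).re = 0 := by rw [hc]; simp
  simp [Complex.add_re] at this
  linarith

lemma mob_mob {w : ℂ} (h : 1 + w ≠ 0) : mob (mob w) = w := by
  have h1 : 1 - mob w = 2 * w / (1 + w) := by unfold mob; field_simp; ring
  have h2 : 1 + mob w = 2 / (1 + w) := by unfold mob; field_simp; ring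
  rw [mob, h1, h2]
  field_simp

lemma re_mob_pos {w : ℂ} (h : ‖w‖ < 1) : 0 < (mob w).re := by
  have h1 : 1 + w ≠ 0 := one_add_ne_zero_of_norm_lt_one h
  have h3 : 0 < Complex.normSq (1 + w) := Complex.normSq_pos.mpr h1
  have h2 : Complex.normSq w < 1 := by
    have : Complex.normSq w = ‖w‖ ^ 2 := by
      rw [Complex.normSq_eq_norm_sq]
    rw [this]
    nlinarith [norm_nonneg w]
  rw [mob, Complex.div_re, ← add_div]
  apply div_pos _ h3
  have : (1 - w).re * (1 + w).re + (1 - w).im * (1 + w).im = 1 - Complex.normSq w := by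
    simp [Complex.normSq_apply, Complex.add_re, Complex.sub_re, Complex.add_im, Complex.sub_im]
    ring
  rw [this]; linarith

lemma norm_mob_lt_one {z : ℂ} (h : 0 < z.re) : ‖mob z‖ < 1 := by
  have h1 : 1 + z ≠ 0 := one_add_ne_zero_of_re_pos h
  have hlt : Complex.normSq (1 - z) < Complex.normSq (1 + z) := by
    simp only [Complex.normSq_apply, Complex.add_re, Complex.sub_re, Complex.add_im,
      Complex.sub_im, Complex.one_re, Complex.one_im]
    nlinarith
  have hnorm : ‖(1 : ℂ) - z‖ < ‖(1 : ℂ) + z‖ := by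
    have e1 : ‖(1:ℂ) - z‖ ^ 2 = Complex.normSq (1 - z) := by
      rw [Complex.normSq_eq_norm_sq]
    have e2 : ‖(1:ℂ) + z‖ ^ 2 = Complex.normSq (1 + z) := by
      rw [Complex.normSq_eq_norm_sq]
    nlinarith [norm_nonneg ((1:ℂ) - z), norm_nonneg ((1:ℂ) + z)]
  rw [mob, norm_div]
  rw [div_lt_one (norm_pos_iff.mpr h1)]
  exact hnorm

lemma mob_sub (w v : ℂ) (hw : 1 + w ≠ 0) (hv : 1 + v ≠ 0) :
    mob w - mob v = (w - v) * (-2 / ((1 + w) * (1 + v))) := by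
  unfold mob; field_simp; ring

lemma mob_differentiableAt {w : ℂ} (h : 1 + w ≠ 0) : DifferentiableAt ℂ mob w := by
  unfold mob
  exact DifferentiableAt.div (by fun_prop) (by fun_prop) h

lemma logDeriv_congr {f g : ℂ → ℂ} {x : ℂ} (h : f =ᶠ[𝓝 x] g) :
    logDeriv f x = logDeriv g x := by
  simp only [logDeriv_apply, h.deriv_eq, h.self_of_nhds]

/-- Argument principle for an explicitly factored function on a circle. -/
lemma argPrinciple {r : ℝ} (hr : 0 < r) (hr1 : r < 1) (g h : ℂ → ℂ) (T : Finset ℂ) (n : ℂ → ℕ)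
    (hhd : ∀ w ∈ ball (0:ℂ) 1, DifferentiableAt ℂ h w)
    (hh0 : ∀ w ∈ ball (0:ℂ) 1, h w ≠ 0)
    (hT : ∀ v ∈ T, ‖v‖ < r)
    (hfac : ∀ w ∈ ball (0:ℂ) 1, g w = (∏ v ∈ T, (w - v) ^ n v) * h w) :
    (∮ w in C(0, r), logDeriv g w) = (2 * Real.pi * I) * ∑ v ∈ T, (n v : ℂ) := by
  have hsub : sphere (0:ℂ) r ⊆ ball (0:ℂ) 1 := fun w hw => by
    rw [mem_sphere_zero_iff_norm] at hw
    rw [mem_ball_zero_iff, hw]; exact hr1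
  have hballr : closedBall (0:ℂ) r ⊆ ball (0:ℂ) 1 := closedBall_subset_ball hr1
  have hhdo : DifferentiableOn ℂ h (ball (0:ℂ) 1) :=
    fun w hw => (hhd w hw).differentiableWithinAt
  have hhan : AnalyticOnNhd ℂ h (ball (0:ℂ) 1) := hhdo.analyticOnNhd isOpen_ball
  have hder_cont : ContinuousOn (deriv h) (ball (0:ℂ) 1) := hhan.deriv.continuousOn
  have hld_cont : ContinuousOn (logDeriv h) (ball (0:ℂ) 1) := by
    have : ContinuousOn (fun x => deriv h x / h x) (ball (0:ℂ) 1) :=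
      hder_cont.div hhan.continuousOn hh0
    exact this
  have hzero : (∮ w in C(0, r), logDeriv h w) = 0 := by
    refine Complex.circleIntegral_eq_zero_of_differentiable_on_off_countable hr.le
      (Set.countable_empty) (hld_cont.mono hballr) ?_
    intro z hz
    have hz1 : z ∈ ball (0:ℂ) 1 := hballr (ball_subset_closedBall hz.1)
    have : DifferentiableAt ℂ (fun x => deriv h x / h x) z :=
      ((hhan.deriv z hz1).differentiableAt).div (hhd z hz1) (hh0 z hz1)
    exact this
  have key : ∀ w ∈ sphere (0:ℂ) r,
      logDeriv g w = (∑ v ∈ T, (n v : ℂ) / (w - v)) + logDeriv h w := by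
    intro w hw
    have hw1 : w ∈ ball (0:ℂ) 1 := hsub hw
    have hwnorm : ‖w‖ = r := mem_sphere_zero_iff_norm.mp hw
    have hne : ∀ v ∈ T, w - v ≠ 0 := by
      intro v hv
      refine sub_ne_zero.mpr fun e => ?_
      have h' := hT v hv
      rw [← e, hwnorm] at h'
      exact lt_irrefl r h'
    have hev : g =ᶠ[𝓝 w] fun x => (∏ v ∈ T, (x - v) ^ n v) * h x := by
      filter_upwards [isOpen_ball.mem_nhds hw1] with x hx using hfac x hx
    rw [logDeriv_congr hev]
    have hPd : DifferentiableAt ℂ (fun x => ∏ v ∈ T, (x - v) ^ n v) w := by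
      apply DifferentiableAt.fun_finsetProd
      intro v hv
      fun_prop
    have hP0 : (∏ v ∈ T, (w - v) ^ n v) ≠ 0 :=
      Finset.prod_ne_zero_iff.mpr fun v hv => pow_ne_zero _ (hne v hv)
    rw [logDeriv_mul w hP0 (hh0 w hw1) hPd (hhd w hw1)]
    congr 1
    have hprod : logDeriv (fun x => ∏ v ∈ T, (x - v) ^ n v) w
        = ∑ v ∈ T, logDeriv (fun x => (x - v) ^ n v) w :=
      logDeriv_prod (s := T) (f := fun v x => (x - v) ^ n v) (x := w)
        (fun v hv => pow_ne_zero _ (hne v hv)) (fun v hv => by fun_prop)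
    rw [hprod]
    refine Finset.sum_congr rfl fun v hv => ?_
    have h1 : logDeriv (fun x : ℂ => (x - v) ^ n v) w
        = (n v : ℂ) * logDeriv (fun x : ℂ => x - v) w :=
      logDeriv_fun_pow (by fun_prop) (n v)
    have h2 : logDeriv (fun x : ℂ => x - v) w = 1 / (w - v) := by
      rw [logDeriv_apply]
      simp [deriv_sub_const]
    rw [h1, h2, mul_one_div]
  have hsum_cont : ContinuousOn (fun w => ∑ v ∈ T, (n v : ℂ) / (w - v)) (sphere (0:ℂ) r) := by
    apply continuousOn_finset_sum
    intro v hv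
    apply ContinuousOn.div continuousOn_const (by fun_prop)
    intro w hw
    have hwnorm : ‖w‖ = r := mem_sphere_zero_iff_norm.mp hw
    refine sub_ne_zero.mpr fun e => ?_
    have h' := hT v hv
    rw [← e, hwnorm] at h'
    exact lt_irrefl r h'
  have hInt1 : CircleIntegrable (fun w => ∑ v ∈ T, (n v : ℂ) / (w - v)) 0 r :=
    hsum_cont.circleIntegrable hr.le
  have hg_cont : ContinuousOn (logDeriv g) (sphere (0:ℂ) r) := by
    have hrhs : ContinuousOn (fun w => (∑ v ∈ T, (n v : ℂ) / (w - v)) + logDeriv h w)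
        (sphere (0:ℂ) r) := hsum_cont.add (hld_cont.mono hsub)
    exact hrhs.congr key
  have hInt2 : CircleIntegrable (logDeriv g) 0 r := hg_cont.circleIntegrable hr.le
  have hsplit : (∮ w in C(0, r), logDeriv g w)
      = (∮ w in C(0, r), ∑ v ∈ T, (n v : ℂ) / (w - v)) := by
    have h1 : (∮ w in C(0, r), (logDeriv g w - ∑ v ∈ T, (n v : ℂ) / (w - v)))
        = (∮ w in C(0, r), logDeriv g w) - ∮ w in C(0, r), ∑ v ∈ T, (n v : ℂ) / (w - v) :=
      circleIntegral.integral_sub hInt2 hInt1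
    have h2 : (∮ w in C(0, r), (logDeriv g w - ∑ v ∈ T, (n v : ℂ) / (w - v)))
        = ∮ w in C(0, r), logDeriv h w := by
      refine circleIntegral.integral_congr hr.le fun w hw => ?_
      rw [key w hw]; ring
    rw [h2, hzero] at h1
    exact sub_eq_zero.mp h1.symm
  rw [hsplit]
  have hswap : (∮ w in C(0, r), ∑ v ∈ T, (n v : ℂ) / (w - v))
      = ∑ v ∈ T, ∮ w in C(0, r), (n v : ℂ) / (w - v) := by
    simp only [circleIntegral]
    have heq : (fun θ => deriv (circleMap 0 r) θ •
          ∑ v ∈ T, (n v : ℂ) / (circleMap 0 r θ - v))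
        = fun θ => ∑ v ∈ T, deriv (circleMap 0 r) θ • ((n v : ℂ) / (circleMap 0 r θ - v)) := by
      funext θ; rw [Finset.smul_sum]
    rw [heq]
    refine intervalIntegral.integral_finset_sum fun v hv => ?_
    have hci : CircleIntegrable (fun w => (n v : ℂ) / (w - v)) 0 r := by
      apply ContinuousOn.circleIntegrable hr.le
      apply ContinuousOn.div continuousOn_const (by fun_prop)
      intro w hw
      have hwnorm : ‖w‖ = r := mem_sphere_zero_iff_norm.mp hw
      refine sub_ne_zero.mpr fun e => ?_
      have h' := hT v hv
      rw [← e, hwnorm] at h'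
      exact lt_irrefl r h'
    exact hci.out
  rw [hswap, Finset.mul_sum]
  refine Finset.sum_congr rfl fun v hv => ?_
  have hv' : v ∈ ball (0:ℂ) r := mem_ball_zero_iff.mpr (hT v hv)
  calc (∮ w in C(0, r), (n v : ℂ) / (w - v))
      = (n v : ℂ) * ∮ w in C(0, r), (w - v)⁻¹ := by
        rw [← circleIntegral.integral_const_mul]
        refine circleIntegral.integral_congr hr.le fun w hw => ?_
        rw [div_eq_mul_inv]
    _ = (n v : ℂ) * (2 * Real.pi * I) := by
        rw [circleIntegral.integral_sub_inv_of_mem_ball hv']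
    _ = 2 * Real.pi * I * (n v : ℂ) := by ring

/-- Rouché step: equal logarithmic-derivative circle integrals. -/
lemma rouche {r : ℝ} (hr : 0 < r) (hr1 : r < 1) (a b : ℂ → ℂ)
    (ha : ∀ w ∈ ball (0:ℂ) 1, DifferentiableAt ℂ a w)
    (hb : ∀ w ∈ ball (0:ℂ) 1, DifferentiableAt ℂ b w)
    (hlt : ∀ w ∈ sphere (0:ℂ) r, ‖b w - a w‖ < ‖a w‖) :
    (∮ w in C(0, r), logDeriv b w) = ∮ w in C(0, r), logDeriv a w := by
  have hsub : sphere (0:ℂ) r ⊆ ball (0:ℂ) 1 := fun w hw => by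
    rw [mem_sphere_zero_iff_norm] at hw
    rw [mem_ball_zero_iff, hw]; exact hr1
  have ha0 : ∀ w ∈ sphere (0:ℂ) r, a w ≠ 0 := by
    intro w hw h0
    have := hlt w hw
    rw [h0, sub_zero, norm_zero] at this
    exact absurd this (not_lt.mpr (norm_nonneg _))
  have hb0 : ∀ w ∈ sphere (0:ℂ) r, b w ≠ 0 := by
    intro w hw h0
    have := hlt w hw
    rw [h0, zero_sub, norm_neg] at this
    exact lt_irrefl _ this
  set q : ℂ → ℂ := fun x => b x / a x with hq
  set E : ℝ → ℂ := fun θ => Complex.log (q (circleMap 0 r θ)) with hE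
  set G : ℝ → ℂ := fun θ => deriv (circleMap 0 r) θ •
    (logDeriv b (circleMap 0 r θ) - logDeriv a (circleMap 0 r θ)) with hG
  have hder : ∀ θ : ℝ, HasDerivAt E (G θ) θ := by
    intro θ
    set w := circleMap 0 r θ with hw
    have hwsph : w ∈ sphere (0:ℂ) r := circleMap_mem_sphere 0 hr.le θ
    have hw1 : w ∈ ball (0:ℂ) 1 := hsub hwsph
    have haw : a w ≠ 0 := ha0 w hwsph
    have hbw : b w ≠ 0 := hb0 w hwsph
    have hqd : DifferentiableAt ℂ q w := (hb w hw1).div (ha w hw1) haw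
    have hq0 : q w ≠ 0 := div_ne_zero hbw haw
    have hre : 0 < (q w).re := by
      have h1 : ‖q w - 1‖ < 1 := by
        have he : q w - 1 = (b w - a w) / a w := by
          show b w / a w - 1 = (b w - a w) / a w
          field_simp
        rw [he, norm_div, div_lt_one (norm_pos_iff.mpr haw)]
        exact hlt w hwsph
      have h2 : |(q w).re - 1| ≤ ‖q w - 1‖ := by
        have h3 := Complex.abs_re_le_norm (q w - 1)
        simpa [Complex.sub_re] using h3
      have h4 := abs_lt.mp (lt_of_le_of_lt h2 h1)
      linarith [h4.1]
    have hslit : q w ∈ Complex.slitPlane := Complex.mem_slitPlane_iff.mpr (Or.inl hre)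
    have hlog : HasDerivAt Complex.log (q w)⁻¹ (q w) := Complex.hasDerivAt_log hslit
    have hγ : HasDerivAt (circleMap 0 r) (circleMap 0 r θ * I) θ := hasDerivAt_circleMap 0 r θ
    have hqc : HasDerivAt (fun t => q (circleMap 0 r t)) (deriv q w * (circleMap 0 r θ * I)) θ :=
      by have := (hqd.hasDerivAt).comp θ hγ; exact this
    have hEd : HasDerivAt E ((q w)⁻¹ * (deriv q w * (circleMap 0 r θ * I))) θ :=
      by have := hlog.comp θ hqc; exact this
    have hval : (q w)⁻¹ * (deriv q w * (circleMap 0 r θ * I)) = G θ := by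
      have hld : logDeriv b w - logDeriv a w = deriv q w / q w := by
        rw [← logDeriv_apply]
        rw [← logDeriv_div w hbw haw (hb w hw1) (ha w hw1)]
      rw [hG]
      simp only [deriv_circleMap, smul_eq_mul]
      rw [hld, ← hw]
      field_simp
    rw [← hval]
    exact hEd
  have hldcont : ∀ (c : ℂ → ℂ), (∀ w ∈ ball (0:ℂ) 1, DifferentiableAt ℂ c w) →
      (∀ w ∈ sphere (0:ℂ) r, c w ≠ 0) → ContinuousOn (logDeriv c) (sphere (0:ℂ) r) := by
    intro c hc hc0
    have hcdo : DifferentiableOn ℂ c (ball (0:ℂ) 1) :=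
      fun w hw => (hc w hw).differentiableWithinAt
    have hcan : AnalyticOnNhd ℂ c (ball (0:ℂ) 1) := hcdo.analyticOnNhd isOpen_ball
    have : ContinuousOn (fun x => deriv c x / c x) (sphere (0:ℂ) r) :=
      ContinuousOn.div (hcan.deriv.continuousOn.mono hsub)
        (hcan.continuousOn.mono hsub) hc0
    exact this
  have hIa : CircleIntegrable (logDeriv a) 0 r :=
    (hldcont a ha ha0).circleIntegrable hr.le
  have hIb : CircleIntegrable (logDeriv b) 0 r :=
    (hldcont b hb hb0).circleIntegrable hr.le
  have hGint : IntervalIntegrable G MeasureTheory.volume 0 (2 * Real.pi) := by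
    have : CircleIntegrable (fun w => logDeriv b w - logDeriv a w) 0 r := by
      apply ContinuousOn.circleIntegrable hr.le
      exact (hldcont b hb hb0).sub (hldcont a ha ha0)
    exact this.out
  have hmain : (∮ w in C(0, r), (logDeriv b w - logDeriv a w)) = 0 := by
    have h1 : (∮ w in C(0, r), (logDeriv b w - logDeriv a w))
        = ∫ θ in (0:ℝ)..(2 * Real.pi), G θ := rfl
    rw [h1]
    rw [intervalIntegral.integral_eq_sub_of_hasDerivAt (fun t _ => hder t) hGint]
    have : circleMap 0 r (2 * Real.pi) = circleMap 0 r 0 := by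
      have := periodic_circleMap 0 r 0
      simpa using this
    simp only [hE, this, sub_self]
  have hsplit := circleIntegral.integral_sub hIb hIa
  rw [hmain] at hsplit
  exact sub_eq_zero.mp hsplit.symm

/-- Build a global nonvanishing factor from local factorizations. -/
lemma buildFactor (φ : ℂ → ℂ) (S : Finset ℂ) (m : ℂ → ℕ)
    (hφ : ∀ w ∈ ball (0:ℂ) 1, DifferentiableAt ℂ φ w)
    (hz : ∀ w ∈ ball (0:ℂ) 1, φ w = 0 → w ∈ S)
    (hm : ∀ v ∈ S, ∃ g : ℂ → ℂ, DifferentiableAt ℂ g v ∧ g v ≠ 0 ∧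
          ∀ᶠ w in 𝓝 v, φ w = (w - v) ^ m v * g w) :
    ∃ h : ℂ → ℂ, ∀ w ∈ ball (0:ℂ) 1, DifferentiableAt ℂ h w ∧ h w ≠ 0 ∧
      φ w = (∏ v ∈ S, (w - v) ^ m v) * h w := by
  classical
  set P : ℂ → ℂ := fun w => ∏ v ∈ S, (w - v) ^ m v with hP
  set q : ℂ → ℂ := fun w => φ w / P w with hq
  set h : ℂ → ℂ := fun w => if w ∈ S then limUnder (𝓝[≠] w) q else q w with hh
  have hPd : ∀ x : ℂ, DifferentiableAt ℂ P x := by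
    intro x
    apply DifferentiableAt.fun_finsetProd
    intro v hv
    fun_prop
  refine ⟨h, ?_⟩
  intro w0 hw0
  by_cases hw0S : w0 ∈ S
  · obtain ⟨g, hgd, hg0, hgev⟩ := hm w0 hw0S
    set Q : ℂ → ℂ := fun w => ∏ v ∈ S.erase w0, (w - v) ^ m v with hQ
    have hQ0 : Q w0 ≠ 0 := by
      refine Finset.prod_ne_zero_iff.mpr fun v hv => pow_ne_zero _ (sub_ne_zero.mpr ?_)
      exact fun e => (Finset.mem_erase.mp hv).1 e.symm
    have hQd : ∀ x : ℂ, DifferentiableAt ℂ Q x := by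
      intro x
      apply DifferentiableAt.fun_finsetProd
      intro v hv
      fun_prop
    set h₀ : ℂ → ℂ := fun w => g w / Q w with hh₀
    have h₀d : DifferentiableAt ℂ h₀ w0 := hgd.div (hQd w0) hQ0
    have h₀0 : h₀ w0 ≠ 0 := div_ne_zero hg0 hQ0
    have hPsplit : ∀ w : ℂ, P w = (w - w0) ^ m w0 * Q w :=
      fun w => (Finset.mul_prod_erase S _ hw0S).symm
    have hScE : ∀ᶠ x in 𝓝 w0, x ∉ S.erase w0 := by
      have hcl : IsClosed ((S.erase w0 : Finset ℂ) : Set ℂ) :=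
        (S.erase w0).finite_toSet.isClosed
      have : w0 ∈ (((S.erase w0 : Finset ℂ) : Set ℂ))ᶜ := by
        simp
      filter_upwards [hcl.isOpen_compl.mem_nhds this] with x hx
      simp only [Set.mem_compl_iff, Finset.mem_coe] at hx
      exact hx
    have E1 : q =ᶠ[𝓝[≠] w0] h₀ := by
      filter_upwards [eventually_nhdsWithin_of_eventually_nhds hgev,
        eventually_nhdsWithin_of_eventually_nhds hScE, self_mem_nhdsWithin] with x hx1 hx2 hx3
      have hxw0 : x ≠ w0 := hx3
      have hpow : (x - w0) ^ m w0 ≠ 0 := pow_ne_zero _ (sub_ne_zero.mpr hxw0)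
      show φ x / P x = g x / Q x
      rw [hx1, hPsplit x]
      exact mul_div_mul_left _ _ hpow
    have hlim : Tendsto q (𝓝[≠] w0) (𝓝 (h₀ w0)) := by
      refine Tendsto.congr' E1.symm ?_
      exact (h₀d.continuousAt.continuousWithinAt : ContinuousWithinAt h₀ {w0}ᶜ w0)
    have hval : h w0 = h₀ w0 := by
      simp only [hh, if_pos hw0S]
      exact hlim.limUnder_eq
    have E1' : h =ᶠ[𝓝[≠] w0] h₀ := by
      have hhq : h =ᶠ[𝓝[≠] w0] q := by
        filter_upwards [eventually_nhdsWithin_of_eventually_nhds hScE,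
          self_mem_nhdsWithin] with x hx2 hx3
        have hxS : x ∉ S := by
          intro hxs
          exact hx2 (Finset.mem_erase.mpr ⟨hx3, hxs⟩)
        simp only [hh, if_neg hxS]
      exact hhq.trans E1
    have E2 : h =ᶠ[𝓝 w0] h₀ := by
      rw [← nhdsNE_sup_pure w0]
      rw [Filter.EventuallyEq, eventually_sup]
      exact ⟨E1', by rwa [eventually_pure]⟩
    refine ⟨E2.differentiableAt_iff.mpr h₀d, hval ▸ h₀0, ?_⟩
    have hφw0 : φ w0 = (0:ℂ) ^ m w0 * g w0 := by
      have := hgev.self_of_nhds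
      simpa using this
    show φ w0 = P w0 * h w0
    rw [hval, hPsplit w0, hφw0, sub_self]
    rw [hh₀]
    field_simp
  · have hP0 : P w0 ≠ 0 := by
      refine Finset.prod_ne_zero_iff.mpr fun v hv => pow_ne_zero _ (sub_ne_zero.mpr ?_)
      exact fun e => hw0S (e ▸ hv)
    have hSc : ∀ᶠ x in 𝓝 w0, x ∉ S := by
      have hcl : IsClosed ((S : Finset ℂ) : Set ℂ) := S.finite_toSet.isClosed
      have : w0 ∈ (((S : Finset ℂ) : Set ℂ))ᶜ := by simpa using hw0S
      filter_upwards [hcl.isOpen_compl.mem_nhds this] with x hx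
      simp only [Set.mem_compl_iff, Finset.mem_coe] at hx
      exact hx
    have hev : h =ᶠ[𝓝 w0] q := by
      filter_upwards [hSc] with x hx
      simp only [hh, if_neg hx]
    have hqd : DifferentiableAt ℂ q w0 := (hφ w0 hw0).div (hPd w0) hP0
    have hφ0 : φ w0 ≠ 0 := fun e => hw0S (hz w0 hw0 e)
    have hhw0 : h w0 = q w0 := by simp only [hh, if_neg hw0S]
    refine ⟨hev.differentiableAt_iff.mpr hqd, ?_, ?_⟩
    · rw [hhw0]
      exact div_ne_zero hφ0 hP0
    · rw [hhw0]
      show φ w0 = P w0 * (φ w0 / P w0)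
      field_simp

/-- Transport a local factorization through the Möbius map. -/
lemma transport {f : ℂ → ℂ} {z : ℂ} (hzre : 0 < z.re) (n : ℕ) (g : ℂ → ℂ)
    (hgd : DifferentiableAt ℂ g z) (hg0 : g z ≠ 0)
    (hev : ∀ᶠ w in 𝓝 z, f w = (w - z) ^ n * g w) :
    ∃ g' : ℂ → ℂ, DifferentiableAt ℂ g' (mob z) ∧ g' (mob z) ≠ 0 ∧
      ∀ᶠ x in 𝓝 (mob z), f (mob x) = (x - mob z) ^ n * g' x := by
  have hz1 : 1 + z ≠ 0 := one_add_ne_zero_of_re_pos hzre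
  set v := mob z with hv
  have hvlt : ‖v‖ < 1 := norm_mob_lt_one hzre
  have hv1 : 1 + v ≠ 0 := one_add_ne_zero_of_norm_lt_one hvlt
  have hmv : mob v = z := mob_mob hz1
  set c : ℂ → ℂ := fun x => -2 / ((1 + x) * (1 + v)) with hc
  refine ⟨fun x => c x ^ n * g (mob x), ?_, ?_, ?_⟩
  · apply DifferentiableAt.mul
    · apply DifferentiableAt.pow
      exact DifferentiableAt.div (by fun_prop) (by fun_prop) (mul_ne_zero hv1 hv1)
    · have hgd' : DifferentiableAt ℂ g (mob v) := hmv ▸ hgd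
      exact hgd'.comp v (mob_differentiableAt hv1)
  · apply mul_ne_zero
    · apply pow_ne_zero
      exact div_ne_zero (by norm_num) (mul_ne_zero hv1 hv1)
    · rw [hmv]; exact hg0
  · have htend : Tendsto mob (𝓝 v) (𝓝 z) := by
      have h := (mob_differentiableAt hv1).continuousAt
      rwa [ContinuousAt, hmv] at h
    have h1 : ∀ᶠ x in 𝓝 v, f (mob x) = (mob x - z) ^ n * g (mob x) := htend.eventually hev
    have h2 : ∀ᶠ x in 𝓝 v, 1 + x ≠ 0 := by
      have hca : ContinuousAt (fun x : ℂ => 1 + x) v := by fun_prop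
      exact hca.eventually_ne hv1
    filter_upwards [h1, h2] with x hx1 hx2
    rw [hx1]
    have h3 : mob x - z = (x - v) * c x := by
      have h4 := mob_sub x v hx2 hv1
      rw [hmv] at h4
      exact h4
    rw [h3, mul_pow]
    ring

end Stmt10Aux
section MainTheorem

open Stmt10Aux Metric

/-- Nyquist / argument-principle step. -/
theorem stmt10 (U : Set ℂ) (hU : IsOpen U) (hRHP : {z : ℂ | 0 ≤ z.re} ⊆ U)
    (f F : ℂ → ℂ)
    (hf : DifferentiableOn ℂ f U) (hF : DifferentiableOn ℂ F U)
    (hflim : Tendsto f (cocompact ℂ ⊓ 𝓟 {z : ℂ | 0 ≤ z.re}) (nhds 1))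
    (hFlim : Tendsto F (cocompact ℂ ⊓ 𝓟 {z : ℂ | 0 ≤ z.re}) (nhds 1))
    (hfax : ∀ ω : ℝ, f (Complex.I * ω) ≠ 0)
    (hFax : ∀ ω : ℝ, F (Complex.I * ω) ≠ 0)
    (hclose : (⨆ ω : ℝ, ‖F (Complex.I * ω) - f (Complex.I * ω)‖) <
      ⨅ ω : ℝ, ‖f (Complex.I * ω)‖)
    (hffin : {z : ℂ | 0 < z.re ∧ f z = 0}.Finite)
    (hFfin : {z : ℂ | 0 < z.re ∧ F z = 0}.Finite)
    (ordf ordF : ℂ → ℕ)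
    (hordf : ∀ z : ℂ, 0 < z.re → ∃ g : ℂ → ℂ, AnalyticAt ℂ g z ∧ g z ≠ 0 ∧
      ∀ᶠ w in nhds z, f w = (w - z) ^ ordf z * g w)
    (hordF : ∀ z : ℂ, 0 < z.re → ∃ g : ℂ → ℂ, AnalyticAt ℂ g z ∧ g z ≠ 0 ∧
      ∀ᶠ w in nhds z, F w = (w - z) ^ ordF z * g w) :
    ∑ᶠ z ∈ {z : ℂ | 0 < z.re}, ordF z = ∑ᶠ z ∈ {z : ℂ | 0 < z.re}, ordf z := by
  classical
  -- differentiability at points of U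
  have hfd : ∀ z : ℂ, z ∈ U → DifferentiableAt ℂ f z :=
    fun z hz => hf.differentiableAt (hU.mem_nhds hz)
  have hFd : ∀ z : ℂ, z ∈ U → DifferentiableAt ℂ F z :=
    fun z hz => hF.differentiableAt (hU.mem_nhds hz)
  -- the transported functions on the disc
  have hmemU : ∀ w : ℂ, w ∈ ball (0:ℂ) 1 → mob w ∈ U := fun w hw =>
    hRHP (le_of_lt (re_mob_pos (mem_ball_zero_iff.mp hw)))
  have hftd : ∀ w ∈ ball (0:ℂ) 1, DifferentiableAt ℂ (fun x => f (mob x)) w := fun w hw =>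
    (hfd _ (hmemU w hw)).comp w
      (mob_differentiableAt (one_add_ne_zero_of_norm_lt_one (mem_ball_zero_iff.mp hw)))
  have hFtd : ∀ w ∈ ball (0:ℂ) 1, DifferentiableAt ℂ (fun x => F (mob x)) w := fun w hw =>
    (hFd _ (hmemU w hw)).comp w
      (mob_differentiableAt (one_add_ne_zero_of_norm_lt_one (mem_ball_zero_iff.mp hw)))
  -- support facts
  have hordf_zero : ∀ z : ℂ, 0 < z.re → ordf z ≠ 0 → f z = 0 := by
    intro z hz hn
    obtain ⟨g, _, _, hev⟩ := hordf z hz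
    have h1 := hev.self_of_nhds
    simpa [sub_self, zero_pow hn] using h1
  have hordF_zero : ∀ z : ℂ, 0 < z.re → ordF z ≠ 0 → F z = 0 := by
    intro z hz hn
    obtain ⟨g, _, _, hev⟩ := hordF z hz
    have h1 := hev.self_of_nhds
    simpa [sub_self, zero_pow hn] using h1
  -- the finite zero sets
  set Sf : Finset ℂ := hffin.toFinset with hSfdef
  set SF : Finset ℂ := hFfin.toFinset with hSFdef
  -- pointwise strict inequality on the axis
  have hmap : Tendsto (fun ω : ℝ => Complex.I * (ω : ℂ))
      (cocompact ℝ) (cocompact ℂ ⊓ 𝓟 {z : ℂ | 0 ≤ z.re}) := by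
    rw [tendsto_inf]
    constructor
    · rw [hasBasis_cocompact.tendsto_right_iff]
      intro K hK
      obtain ⟨M, hM⟩ := hK.isBounded.subset_closedBall 0
      rw [Filter.eventually_iff, Filter.mem_cocompact]
      refine ⟨Metric.closedBall (0:ℝ) M, isCompact_closedBall 0 M, ?_⟩
      intro ω hω
      simp only [Set.mem_compl_iff, Metric.mem_closedBall, Real.dist_eq, sub_zero,
        not_le] at hω
      simp only [Set.mem_setOf_eq, Set.mem_compl_iff]
      intro hKmem
      have h1 := hM hKmem
      rw [Metric.mem_closedBall, dist_zero_right] at h1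
      have h2 : ‖Complex.I * (ω : ℂ)‖ = |ω| := by
        rw [norm_mul, Complex.norm_I, one_mul, Complex.norm_real, Real.norm_eq_abs]
      rw [h2] at h1
      linarith
    · rw [tendsto_principal]
      refine Eventually.of_forall fun ω => ?_
      simp [Complex.mul_re]
  have hax0 : Tendsto (fun ω : ℝ => F (Complex.I * ω) - f (Complex.I * ω))
      (cocompact ℝ) (nhds 0) := by
    have h1 := (hFlim.comp hmap).sub (hflim.comp hmap)
    simpa using h1
  have hmul : Continuous fun ω : ℝ => Complex.I * (ω : ℂ) := by fun_prop
  have hcont_axis : Continuous fun ω : ℝ => ‖F (Complex.I * ω) - f (Complex.I * ω)‖ := by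
    refine continuous_iff_continuousAt.mpr fun ω => ?_
    have hmem : (Complex.I * (ω : ℂ)) ∈ U := hRHP (by simp [Complex.mul_re])
    have hc1 : ContinuousAt (fun ω : ℝ => F (Complex.I * (ω : ℂ))) ω :=
      ContinuousAt.comp (g := F) (f := fun ω : ℝ => Complex.I * (ω : ℂ))
        (hFd _ hmem).continuousAt hmul.continuousAt
    have hc2 : ContinuousAt (fun ω : ℝ => f (Complex.I * (ω : ℂ))) ω :=
      ContinuousAt.comp (g := f) (f := fun ω : ℝ => Complex.I * (ω : ℂ))
        (hfd _ hmem).continuousAt hmul.continuousAt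
    exact (hc1.sub hc2).norm
  have hbdd : BddAbove (Set.range fun ω : ℝ => ‖F (Complex.I * ω) - f (Complex.I * ω)‖) := by
    have hev : ∀ᶠ ω : ℝ in cocompact ℝ, ‖F (Complex.I * ω) - f (Complex.I * ω)‖ ≤ 1 := by
      have h1 : Tendsto (fun ω : ℝ => ‖F (Complex.I * ω) - f (Complex.I * ω)‖)
          (cocompact ℝ) (nhds 0) := by simpa using hax0.norm
      have h2 := h1.eventually_lt_const (by norm_num : (0:ℝ) < 1)
      filter_upwards [h2] with ω hω using hω.le
    rw [Filter.eventually_iff, Filter.mem_cocompact] at hev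
    obtain ⟨K, hK, hKsub⟩ := hev
    have himg : BddAbove ((fun ω : ℝ => ‖F (Complex.I * ω) - f (Complex.I * ω)‖) '' K) :=
      (hK.image hcont_axis).bddAbove
    obtain ⟨B, hB⟩ := himg
    refine ⟨max B 1, ?_⟩
    rintro x ⟨ω, rfl⟩
    by_cases hω : ω ∈ K
    · exact le_max_of_le_left (hB (Set.mem_image_of_mem _ hω))
    · exact le_max_of_le_right (hKsub hω)
  have haxis : ∀ ω : ℝ, ‖F (Complex.I * ω) - f (Complex.I * ω)‖ < ‖f (Complex.I * ω)‖ := by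
    intro ω
    calc ‖F (Complex.I * ω) - f (Complex.I * ω)‖
        ≤ ⨆ ω : ℝ, ‖F (Complex.I * ω) - f (Complex.I * ω)‖ := le_ciSup hbdd ω
      _ < ⨅ ω : ℝ, ‖f (Complex.I * ω)‖ := hclose
      _ ≤ ‖f (Complex.I * ω)‖ := ciInf_le ⟨0, by rintro x ⟨ω', rfl⟩; exact norm_nonneg _⟩ ω
  -- far field
  obtain ⟨M, hfar⟩ : ∃ M : ℝ, ∀ z : ℂ, 0 ≤ z.re → M < ‖z‖ → ‖F z - f z‖ < ‖f z‖ := by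
    have h1 : ∀ᶠ z in cocompact ℂ ⊓ 𝓟 {z : ℂ | 0 ≤ z.re},
        ‖f z - 1‖ < 4⁻¹ ∧ ‖F z - 1‖ < 4⁻¹ := by
      have hf1 := Metric.tendsto_nhds.mp hflim 4⁻¹ (by norm_num)
      have hF1 := Metric.tendsto_nhds.mp hFlim 4⁻¹ (by norm_num)
      filter_upwards [hf1, hF1] with z hz1 hz2
      rw [dist_eq_norm] at hz1 hz2
      exact ⟨hz1, hz2⟩
    rw [Filter.eventually_inf_principal] at h1
    rw [Filter.eventually_iff, Filter.mem_cocompact] at h1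
    obtain ⟨K, hK, hKsub⟩ := h1
    obtain ⟨M, hM⟩ := hK.isBounded.subset_closedBall 0
    refine ⟨M, fun z hzre hz => ?_⟩
    have hzK : z ∉ K := by
      intro hzk
      have h2 := hM hzk
      rw [Metric.mem_closedBall, dist_zero_right] at h2
      linarith
    have hb := hKsub hzK hzre
    have e1 : ‖F z - f z‖ ≤ ‖F z - 1‖ + ‖f z - 1‖ := by
      have : F z - f z = (F z - 1) - (f z - 1) := by ring
      rw [this]
      exact norm_sub_le _ _
    have e2 := abs_norm_sub_norm_le (f z) 1
    rw [norm_one] at e2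
    have e3 := abs_le.mp e2
    linarith [hb.1, hb.2, e3.1]
  -- the bad set
  set Bad : Set ℂ := {z : ℂ | 0 ≤ z.re ∧ ‖f z‖ ≤ ‖F z - f z‖} with hBaddef
  have hBadsub : Bad ⊆ Metric.closedBall 0 M := by
    intro z hz
    rw [Metric.mem_closedBall, dist_zero_right]
    by_contra hc
    push_neg at hc
    exact absurd (hfar z hz.1 hc) (not_lt.mpr hz.2)
  have hBadclosed : IsClosed Bad := by
    rw [← isSeqClosed_iff_isClosed]
    intro x z hmem hlim
    have hzre : 0 ≤ z.re := by
      have hre : Tendsto (fun n => (x n).re) atTop (nhds z.re) :=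
        (Complex.continuous_re.continuousAt.tendsto.comp hlim)
      exact le_of_tendsto_of_tendsto' tendsto_const_nhds hre fun n => (hmem n).1
    have hzU : z ∈ U := hRHP hzre
    refine ⟨hzre, ?_⟩
    have t1 : Tendsto (fun n => ‖f (x n)‖) atTop (nhds ‖f z‖) :=
      (((hfd z hzU).continuousAt.tendsto.comp hlim)).norm
    have t2 : Tendsto (fun n => ‖F (x n) - f (x n)‖) atTop (nhds ‖F z - f z‖) :=
      ((((hFd z hzU).continuousAt.tendsto.comp hlim)).sub
        (((hfd z hzU).continuousAt.tendsto.comp hlim))).norm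
    exact le_of_tendsto_of_tendsto' t1 t2 fun n => (hmem n).2
  have hBadcompact : IsCompact Bad :=
    (isCompact_closedBall (0:ℂ) M).of_isClosed_subset hBadclosed hBadsub
  have hBadpos : ∀ z ∈ Bad, 0 < z.re := by
    intro z hz
    rcases lt_or_eq_of_le hz.1 with h | h
    · exact h
    · exfalso
      have hz0 : z = Complex.I * (z.im : ℝ) := by
        apply Complex.ext <;> simp [Complex.mul_re, Complex.mul_im, ← h]
      have h2 := haxis z.im
      rw [← hz0] at h2
      exact absurd hz.2 (not_le.mpr h2)
  -- the compact set containing all obstructions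
  set Cset : Set ℂ := Bad ∪ ((Sf : Set ℂ) ∪ (SF : Set ℂ)) with hCsetdef
  have hCcompact : IsCompact Cset :=
    hBadcompact.union ((Sf.finite_toSet.isCompact).union (SF.finite_toSet.isCompact))
  have hCpos : ∀ z ∈ Cset, 0 < z.re := by
    intro z hz
    rcases hz with h | h | h
    · exact hBadpos z h
    · exact (hffin.mem_toFinset.mp h).1
    · exact (hFfin.mem_toFinset.mp h).1
  set mobC : Set ℂ := mob '' Cset with hmobCdef
  have hmobCcompact : IsCompact mobC := by
    refine hCcompact.image_of_continuousOn ?_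
    intro z hz
    exact (mob_differentiableAt
      (one_add_ne_zero_of_re_pos (hCpos z hz))).continuousAt.continuousWithinAt
  have hmobCball : ∀ x ∈ mobC, ‖x‖ < 1 := by
    rintro x ⟨z, hz, rfl⟩
    exact norm_mob_lt_one (hCpos z hz)
  obtain ⟨r, hr0, hr1, hrC⟩ : ∃ r : ℝ, 0 < r ∧ r < 1 ∧ ∀ x ∈ mobC, ‖x‖ < r := by
    rcases mobC.eq_empty_or_nonempty with he | hne
    · refine ⟨1/2, by norm_num, by norm_num, ?_⟩
      intro x hx
      rw [he] at hx
      exact absurd hx (Set.notMem_empty x)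
    · obtain ⟨x0, hx0, hmax⟩ := hmobCcompact.exists_isMaxOn hne continuous_norm.continuousOn
      have hx01 := hmobCball x0 hx0
      refine ⟨(‖x0‖ + 1) / 2, by positivity, by linarith, fun x hx => ?_⟩
      have h1 : ‖x‖ ≤ ‖x0‖ := hmax hx
      linarith
  -- points of Cset pull back into the small ball
  have hmobmem : ∀ z ∈ Cset, mob z ∈ mobC ∧ ‖mob z‖ < r := fun z hz =>
    ⟨⟨z, hz, rfl⟩, hrC _ ⟨z, hz, rfl⟩⟩
  -- sphere facts
  have hsphere : ∀ w ∈ sphere (0:ℂ) r, 0 < (mob w).re ∧ mob w ∉ Cset := by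
    intro w hw
    have hwn : ‖w‖ = r := mem_sphere_zero_iff_norm.mp hw
    have hwlt : ‖w‖ < 1 := by rw [hwn]; exact hr1
    refine ⟨re_mob_pos hwlt, fun hc => ?_⟩
    have h1 : w ∈ mobC := ⟨mob w, hc, mob_mob (one_add_ne_zero_of_norm_lt_one hwlt)⟩
    have h2 := hrC w h1
    rw [hwn] at h2
    exact lt_irrefl r h2
  have hlt : ∀ w ∈ sphere (0:ℂ) r, ‖F (mob w) - f (mob w)‖ < ‖f (mob w)‖ := by
    intro w hw
    obtain ⟨hre, hnc⟩ := hsphere w hw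
    have hnb : mob w ∉ Bad := fun hb => hnc (Or.inl hb)
    rw [hBaddef] at hnb
    simp only [Set.mem_setOf_eq, not_and] at hnb
    exact not_le.mp (hnb hre.le)
  -- zero sets of the transported functions
  set Tf : Finset ℂ := Sf.image mob with hTfdef
  set TF : Finset ℂ := SF.image mob with hTFdef
  have hftz : ∀ w ∈ ball (0:ℂ) 1, f (mob w) = 0 → w ∈ Tf := by
    intro w hw h0
    have hwlt := mem_ball_zero_iff.mp hw
    have hre := re_mob_pos hwlt
    have hmem : mob w ∈ Sf := hffin.mem_toFinset.mpr ⟨hre, h0⟩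
    exact Finset.mem_image.mpr ⟨mob w, hmem,
      mob_mob (one_add_ne_zero_of_norm_lt_one hwlt)⟩
  have hFtz : ∀ w ∈ ball (0:ℂ) 1, F (mob w) = 0 → w ∈ TF := by
    intro w hw h0
    have hwlt := mem_ball_zero_iff.mp hw
    have hre := re_mob_pos hwlt
    have hmem : mob w ∈ SF := hFfin.mem_toFinset.mpr ⟨hre, h0⟩
    exact Finset.mem_image.mpr ⟨mob w, hmem,
      mob_mob (one_add_ne_zero_of_norm_lt_one hwlt)⟩
  -- local factorizations transported to the disc
  have hmf : ∀ v ∈ Tf, ∃ g : ℂ → ℂ, DifferentiableAt ℂ g v ∧ g v ≠ 0 ∧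
      ∀ᶠ x in nhds v, f (mob x) = (x - v) ^ (ordf (mob v)) * g x := by
    intro v hv
    obtain ⟨z, hzS, rfl⟩ := Finset.mem_image.mp hv
    obtain ⟨hzre, _⟩ := hffin.mem_toFinset.mp hzS
    have hnf : ordf (mob (mob z)) = ordf z := by
      rw [mob_mob (one_add_ne_zero_of_re_pos hzre)]
    rw [hnf]
    obtain ⟨g, hga, hg0, hev⟩ := hordf z hzre
    exact transport hzre (ordf z) g hga.differentiableAt hg0 hev
  have hmF : ∀ v ∈ TF, ∃ g : ℂ → ℂ, DifferentiableAt ℂ g v ∧ g v ≠ 0 ∧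
      ∀ᶠ x in nhds v, F (mob x) = (x - v) ^ (ordF (mob v)) * g x := by
    intro v hv
    obtain ⟨z, hzS, rfl⟩ := Finset.mem_image.mp hv
    obtain ⟨hzre, _⟩ := hFfin.mem_toFinset.mp hzS
    have hnf : ordF (mob (mob z)) = ordF z := by
      rw [mob_mob (one_add_ne_zero_of_re_pos hzre)]
    rw [hnf]
    obtain ⟨g, hga, hg0, hev⟩ := hordF z hzre
    exact transport hzre (ordF z) g hga.differentiableAt hg0 hev
  -- global factorizations
  obtain ⟨hf₁, hfprop⟩ := buildFactor (fun x => f (mob x)) Tf (fun v => ordf (mob v))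
    hftd hftz hmf
  obtain ⟨hF₁, hFprop⟩ := buildFactor (fun x => F (mob x)) TF (fun v => ordF (mob v))
    hFtd hFtz hmF
  -- radii of the zero finsets
  have hTfr : ∀ v ∈ Tf, ‖v‖ < r := by
    intro v hv
    obtain ⟨z, hzS, rfl⟩ := Finset.mem_image.mp hv
    exact (hmobmem z (Or.inr (Or.inl (Finset.mem_coe.mpr hzS)))).2
  have hTFr : ∀ v ∈ TF, ‖v‖ < r := by
    intro v hv
    obtain ⟨z, hzS, rfl⟩ := Finset.mem_image.mp hv
    exact (hmobmem z (Or.inr (Or.inr (Finset.mem_coe.mpr hzS)))).2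
  -- the two argument-principle identities
  have hNf : (∮ w in C(0, r), logDeriv (fun x => f (mob x)) w)
      = (2 * Real.pi * Complex.I) * ∑ v ∈ Tf, ((ordf (mob v) : ℂ)) :=
    argPrinciple hr0 hr1 (fun x => f (mob x)) hf₁ Tf (fun v => ordf (mob v))
      (fun w hw => (hfprop w hw).1) (fun w hw => (hfprop w hw).2.1) hTfr
      (fun w hw => (hfprop w hw).2.2)
  have hNF : (∮ w in C(0, r), logDeriv (fun x => F (mob x)) w)
      = (2 * Real.pi * Complex.I) * ∑ v ∈ TF, ((ordF (mob v) : ℂ)) :=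
    argPrinciple hr0 hr1 (fun x => F (mob x)) hF₁ TF (fun v => ordF (mob v))
      (fun w hw => (hFprop w hw).1) (fun w hw => (hFprop w hw).2.1) hTFr
      (fun w hw => (hFprop w hw).2.2)
  -- Rouché
  have hrou := rouche hr0 hr1 (fun x => f (mob x)) (fun x => F (mob x)) hftd hFtd hlt
  -- combine
  have h2pi : (2 * Real.pi * Complex.I : ℂ) ≠ 0 := by
    apply mul_ne_zero
    · apply mul_ne_zero two_ne_zero
      exact_mod_cast Real.pi_ne_zero
    · exact Complex.I_ne_zero
  have hsumC : ∑ v ∈ TF, ((ordF (mob v) : ℂ)) = ∑ v ∈ Tf, ((ordf (mob v) : ℂ)) := by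
    apply mul_left_cancel₀ h2pi
    rw [← hNf, ← hNF, hrou]
  have hsumN : ∑ v ∈ TF, ordF (mob v) = ∑ v ∈ Tf, ordf (mob v) := by
    have hcast : ((∑ v ∈ TF, ordF (mob v) : ℕ) : ℂ) = ((∑ v ∈ Tf, ordf (mob v) : ℕ) : ℂ) := by
      push_cast
      exact hsumC
    exact_mod_cast hcast
  -- rewrite image sums
  have hinjf : ∀ x ∈ Sf, ∀ y ∈ Sf, mob x = mob y → x = y := by
    intro x hx y hy hxy
    have hx1 : 1 + x ≠ 0 := one_add_ne_zero_of_re_pos (hffin.mem_toFinset.mp hx).1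
    have hy1 : 1 + y ≠ 0 := one_add_ne_zero_of_re_pos (hffin.mem_toFinset.mp hy).1
    calc x = mob (mob x) := (mob_mob hx1).symm
      _ = mob (mob y) := by rw [hxy]
      _ = y := mob_mob hy1
  have hinjF : ∀ x ∈ SF, ∀ y ∈ SF, mob x = mob y → x = y := by
    intro x hx y hy hxy
    have hx1 : 1 + x ≠ 0 := one_add_ne_zero_of_re_pos (hFfin.mem_toFinset.mp hx).1
    have hy1 : 1 + y ≠ 0 := one_add_ne_zero_of_re_pos (hFfin.mem_toFinset.mp hy).1
    calc x = mob (mob x) := (mob_mob hx1).symm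
      _ = mob (mob y) := by rw [hxy]
      _ = y := mob_mob hy1
  have hTfsum : ∑ v ∈ Tf, ordf (mob v) = ∑ z ∈ Sf, ordf z := by
    rw [hTfdef, Finset.sum_image hinjf]
    refine Finset.sum_congr rfl fun z hz => ?_
    rw [mob_mob (one_add_ne_zero_of_re_pos (hffin.mem_toFinset.mp hz).1)]
  have hTFsum : ∑ v ∈ TF, ordF (mob v) = ∑ z ∈ SF, ordF z := by
    rw [hTFdef, Finset.sum_image hinjF]
    refine Finset.sum_congr rfl fun z hz => ?_
    rw [mob_mob (one_add_ne_zero_of_re_pos (hFfin.mem_toFinset.mp hz).1)]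
  -- finsum reduction
  have hfin_f : ({z : ℂ | 0 < z.re} ∩ Function.support ordf).Finite := by
    refine hffin.subset ?_
    rintro z ⟨hzre, hzsup⟩
    exact ⟨hzre, hordf_zero z hzre hzsup⟩
  have hfin_F : ({z : ℂ | 0 < z.re} ∩ Function.support ordF).Finite := by
    refine hFfin.subset ?_
    rintro z ⟨hzre, hzsup⟩
    exact ⟨hzre, hordF_zero z hzre hzsup⟩
  have hfinsum_f : ∑ᶠ z ∈ {z : ℂ | 0 < z.re}, ordf z = ∑ z ∈ Sf, ordf z := by
    rw [finsum_mem_eq_sum _ hfin_f]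
    refine Finset.sum_subset ?_ ?_
    · intro z hz
      have h1 := hfin_f.mem_toFinset.mp hz
      exact hffin.mem_toFinset.mpr ⟨h1.1, hordf_zero z h1.1 h1.2⟩
    · intro z hzS hznot
      by_contra hc
      have hmem := hffin.mem_toFinset.mp hzS
      exact hznot (hfin_f.mem_toFinset.mpr ⟨hmem.1, hc⟩)
  have hfinsum_F : ∑ᶠ z ∈ {z : ℂ | 0 < z.re}, ordF z = ∑ z ∈ SF, ordF z := by
    rw [finsum_mem_eq_sum _ hfin_F]
    refine Finset.sum_subset ?_ ?_
    · intro z hz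
      have h1 := hfin_F.mem_toFinset.mp hz
      exact hFfin.mem_toFinset.mpr ⟨h1.1, hordF_zero z h1.1 h1.2⟩
    · intro z hzS hznot
      by_contra hc
      have hmem := hFfin.mem_toFinset.mp hzS
      exact hznot (hfin_F.mem_toFinset.mpr ⟨hmem.1, hc⟩)
  rw [hfinsum_f, hfinsum_F, ← hTfsum, ← hTFsum]
  exact hsumN

end MainTheorem
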